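/- Let G be a (dicot) game such that G + Ḡ has misère outcome N and, for every follower H of G, H + H̄ has misère outcome N. Then G + Ḡ ≡ 0 modulo the universe of dicot games: o⁻(G + Ḡ + X) = o⁻(X) for all dicot games X. -/

import Mathlib

namespace SetTheory

universe u

/-- Pre-games, as formerly in Mathlib (`SetTheory.PGame`, removed since). -/
inductive PGame : Type (u + 1)
  | mk : ∀ α β : Type u, (α → PGame) → (β → PGame) → PGame

namespace PGame

/-- The indexing type for allowable moves by Left. -/
def LeftMoves : PGame → Type u
  | mk l _ _ _ => l

/-- The indexing type for allowable moves by Right. -/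
def RightMoves : PGame → Type u
  | mk _ r _ _ => r

/-- The new game after Left makes an allowed move. -/
def moveLeft : ∀ g : PGame, LeftMoves g → PGame
  | mk _l _ L _ => L

/-- The new game after Right makes an allowed move. -/
def moveRight : ∀ g : PGame, RightMoves g → PGame
  | mk _ _r _ R => R

/-- `IsOption x y` means that `x` is either a left or right option for `y`. -/
inductive IsOption : PGame → PGame → Prop
  | moveLeft {x : PGame} (i : x.LeftMoves) : IsOption (x.moveLeft i) x
  | moveRight {x : PGame} (i : x.RightMoves) : IsOption (x.moveRight i) x

/-- `Subsequent x y` says that `x` can be obtained by playing some nonempty sequence of moves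
from `y`. -/
def Subsequent : PGame → PGame → Prop :=
  Relation.TransGen IsOption

/-- The negation of a pre-game: swap Left and Right recursively. -/
def neg : PGame → PGame
  | ⟨l, r, L, R⟩ => ⟨r, l, fun i => neg (R i), fun i => neg (L i)⟩

instance : Neg PGame :=
  ⟨neg⟩

/-- The sum of `x = {xL | xR}` and `y = {yL | yR}` is `{xL + y, x + yL | xR + y, x + yR}`. -/
noncomputable instance : Add PGame.{u} :=
  ⟨fun x y => by
    induction x generalizing y with | mk xl xr _ _ IHxl IHxr => _
    induction y with | mk yl yr yL yR IHyl IHyr => _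
    have y := mk yl yr yL yR
    refine ⟨xl ⊕ yl, xr ⊕ yr, Sum.rec ?_ ?_, Sum.rec ?_ ?_⟩
    · exact fun i => IHxl i y
    · exact IHyl
    · exact fun i => IHxr i y
    · exact IHyr⟩

end PGame

end SetTheory

open SetTheory

namespace Misere

/-- Misère winning: `(wins G).1` means Left, moving first on `G`, wins under misère play;
`(wins G).2` means Right, moving first, wins. The player unable to move wins. -/
def wins : PGame → Prop × Prop
  | ⟨α, β, L, R⟩ =>
    (IsEmpty α ∨ ∃ i, ¬ (wins (L i)).2,
     IsEmpty β ∨ ∃ j, ¬ (wins (R j)).1)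

/-- Left wins moving first under misère play. -/
def LeftFirst (G : PGame) : Prop := (wins G).1

/-- Right wins moving first under misère play. -/
def RightFirst (G : PGame) : Prop := (wins G).2

/-- Normal-play winning: `(nwins G).1` means Left moving first wins (player unable to move loses). -/
def nwins : PGame → Prop × Prop
  | ⟨α, β, L, R⟩ =>
    (∃ i, ¬ (nwins (L i)).2,
     ∃ j, ¬ (nwins (R j)).1)

/-- Outcome classes. -/
inductive Outcome : Type
  | L | R | N | P
  deriving DecidableEq

/-- The partial order on outcomes: L > P > R, L > N > R, with P and N incomparable. -/
instance : LE Outcome := ⟨fun a b => a = b ∨ a = .R ∨ b = .L⟩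

open Classical in
/-- The misère outcome of a game. -/
noncomputable def misereOutcome (G : PGame) : Outcome :=
  if (wins G).1 then (if (wins G).2 then .N else .L)
  else (if (wins G).2 then .R else .P)

open Classical in
/-- The normal-play outcome of a game. -/
noncomputable def normalOutcome (G : PGame) : Outcome :=
  if (nwins G).1 then (if (nwins G).2 then .N else .L)
  else (if (nwins G).2 then .R else .P)

/-- A game is dicot if every subposition has a Left option iff it has a Right option. -/
def Dicot : PGame → Prop
  | ⟨α, β, L, R⟩ => (IsEmpty α ↔ IsEmpty β) ∧ (∀ i, Dicot (L i)) ∧ (∀ j, Dicot (R j))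

/-- A dead Left end: a Left end all of whose followers are Left ends. -/
def DeadLeftEnd : PGame → Prop
  | ⟨α, _β, _L, R⟩ => IsEmpty α ∧ ∀ j, DeadLeftEnd (R j)

/-- A dead Right end: a Right end all of whose followers are Right ends. -/
def DeadRightEnd : PGame → Prop
  | ⟨_α, β, L, _R⟩ => IsEmpty β ∧ ∀ i, DeadRightEnd (L i)

/-- A follower of `G` is any position reachable from `G`, including `G` itself. -/
def Follower (H G : PGame) : Prop := H = G ∨ PGame.Subsequent H G

/-- An end: a position where some player has no move. -/
def IsEnd (G : PGame) : Prop := IsEmpty G.LeftMoves ∨ IsEmpty G.RightMoves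

/-- A game is dead-ending if every one of its end followers is a dead end. -/
def DeadEnding (G : PGame) : Prop :=
  ∀ H, Follower H G → IsEnd H → (DeadLeftEnd H ∨ DeadRightEnd H)

end Misere

/-!
If Left wins `X` moving first, she wins `G + Ḡ + X` moving first; if Right loses `X` moving
first, he loses `G + Ḡ + X` moving first. Left answers each Right move in the `G + Ḡ` component
by the mirror move, which turns that component into `H + H̄` for a follower `H` of `G`, and
otherwise plays as in `X`. Once `X` is over (for both players at once, since `X` is dicot) she
faces some `H + H̄` and wins it moving first, its outcome being N. The other two comparisons
follow by conjugation: `-(H + H̄) = H̄ + H` is again such a self-sum, for the follower `H̄` of `Ḡ`.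
-/

namespace SetTheory.PGame

universe u

theorem wellFounded_isOption : WellFounded IsOption :=
  ⟨fun x => by
    induction x with
    | mk l r L R ihL ihR =>
      refine ⟨_, fun y h => ?_⟩
      cases h with
      | moveLeft i => exact ihL i
      | moveRight j => exact ihR j⟩

theorem wellFounded_subsequent : WellFounded Subsequent :=
  wellFounded_isOption.transGen

theorem Subsequent.moveLeft {x : PGame} (i : x.LeftMoves) : Subsequent (x.moveLeft i) x :=
  Relation.TransGen.single (IsOption.moveLeft i)

theorem Subsequent.moveRight {x : PGame} (j : x.RightMoves) : Subsequent (x.moveRight j) x :=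
  Relation.TransGen.single (IsOption.moveRight j)

theorem leftMoves_add : ∀ x y : PGame, (x + y).LeftMoves = (x.LeftMoves ⊕ y.LeftMoves)
  | mk _ _ _ _, mk _ _ _ _ => rfl

theorem rightMoves_add : ∀ x y : PGame, (x + y).RightMoves = (x.RightMoves ⊕ y.RightMoves)
  | mk _ _ _ _, mk _ _ _ _ => rfl

def toLeftMovesAdd {x y : PGame} : x.LeftMoves ⊕ y.LeftMoves ≃ (x + y).LeftMoves :=
  Equiv.cast (leftMoves_add x y).symm

def toRightMovesAdd {x y : PGame} : x.RightMoves ⊕ y.RightMoves ≃ (x + y).RightMoves :=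
  Equiv.cast (rightMoves_add x y).symm

theorem add_moveLeft_inl {x y : PGame} (i : x.LeftMoves) :
    (x + y).moveLeft (toLeftMovesAdd (Sum.inl i)) = x.moveLeft i + y := by
  cases x; cases y; rfl

theorem add_moveLeft_inr {x y : PGame} (j : y.LeftMoves) :
    (x + y).moveLeft (toLeftMovesAdd (Sum.inr j)) = x + y.moveLeft j := by
  cases x; cases y; rfl

theorem add_moveRight_inl {x y : PGame} (i : x.RightMoves) :
    (x + y).moveRight (toRightMovesAdd (Sum.inl i)) = x.moveRight i + y := by
  cases x; cases y; rfl

theorem add_moveRight_inr {x y : PGame} (j : y.RightMoves) :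
    (x + y).moveRight (toRightMovesAdd (Sum.inr j)) = x + y.moveRight j := by
  cases x; cases y; rfl

theorem neg_mk {l r : Type u} (L : l → PGame) (R : r → PGame) :
    -mk l r L R = mk r l (fun j => -R j) (fun i => -L i) :=
  rfl

instance : InvolutiveNeg PGame where
  neg_neg x := by
    induction x with
    | mk l r L R ihL ihR => simp only [neg_mk, ihL, ihR]

theorem neg_add (x y : PGame) : -(x + y) = -x + -y := by
  induction x generalizing y with
  | mk xl xr xL xR ihxL ihxR =>
  induction y with
  | mk yl yr yL yR ihyL ihyR =>
  show mk _ _ _ _ = mk _ _ _ _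
  congr 1 <;> funext k <;> rcases k with i | j
  exacts [ihxR i _, ihyR j, ihxL i _, ihyL j]

theorem leftMoves_neg : ∀ x : PGame, (-x).LeftMoves = x.RightMoves
  | mk _ _ _ _ => rfl

theorem rightMoves_neg : ∀ x : PGame, (-x).RightMoves = x.LeftMoves
  | mk _ _ _ _ => rfl

def toLeftMovesNeg {x : PGame} : x.RightMoves ≃ (-x).LeftMoves :=
  Equiv.cast (leftMoves_neg x).symm

def toRightMovesNeg {x : PGame} : x.LeftMoves ≃ (-x).RightMoves :=
  Equiv.cast (rightMoves_neg x).symm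

theorem moveLeft_neg {x : PGame} (j : x.RightMoves) :
    (-x).moveLeft (toLeftMovesNeg j) = -x.moveRight j := by
  cases x; rfl

theorem moveRight_neg {x : PGame} (i : x.LeftMoves) :
    (-x).moveRight (toRightMovesNeg i) = -x.moveLeft i := by
  cases x; rfl

theorem IsOption.neg {x y : PGame} : IsOption x y → IsOption (-x) (-y)
  | moveLeft i => moveRight_neg i ▸ IsOption.moveRight _
  | moveRight j => moveLeft_neg j ▸ IsOption.moveLeft _

theorem Subsequent.neg {x y : PGame} (h : Subsequent x y) : Subsequent (-x) (-y) :=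
  Relation.TransGen.lift (Neg.neg : PGame → PGame) (fun _ _ => IsOption.neg) _ _ h

end SetTheory.PGame

namespace Misere

open PGame

theorem leftFirst_iff {x : PGame} :
    LeftFirst x ↔ IsEmpty x.LeftMoves ∨ ∃ i, ¬ RightFirst (x.moveLeft i) := by
  cases x; rfl

theorem rightFirst_iff {x : PGame} :
    RightFirst x ↔ IsEmpty x.RightMoves ∨ ∃ j, ¬ LeftFirst (x.moveRight j) := by
  cases x; rfl

theorem leftFirst_add_iff {x y : PGame} :
    LeftFirst (x + y) ↔ (IsEmpty x.LeftMoves ∧ IsEmpty y.LeftMoves) ∨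
      (∃ i, ¬ RightFirst (x.moveLeft i + y)) ∨ ∃ j, ¬ RightFirst (x + y.moveLeft j) := by
  rw [leftFirst_iff, ← toLeftMovesAdd.isEmpty_congr, isEmpty_sum,
    ← toLeftMovesAdd.exists_congr_right, Sum.exists]
  simp only [add_moveLeft_inl, add_moveLeft_inr]

theorem rightFirst_add_iff {x y : PGame} :
    RightFirst (x + y) ↔ (IsEmpty x.RightMoves ∧ IsEmpty y.RightMoves) ∨
      (∃ i, ¬ LeftFirst (x.moveRight i + y)) ∨ ∃ j, ¬ LeftFirst (x + y.moveRight j) := by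
  rw [rightFirst_iff, ← toRightMovesAdd.isEmpty_congr, isEmpty_sum,
    ← toRightMovesAdd.exists_congr_right, Sum.exists]
  simp only [add_moveRight_inl, add_moveRight_inr]

theorem leftFirst_neg_and_rightFirst_neg :
    ∀ x : PGame, (LeftFirst (-x) ↔ RightFirst x) ∧ (RightFirst (-x) ↔ LeftFirst x)
  | mk l r L R => by
    rw [neg_mk, leftFirst_iff, rightFirst_iff, leftFirst_iff, rightFirst_iff]
    exact ⟨or_congr Iff.rfl <| exists_congr fun j =>
        not_congr (leftFirst_neg_and_rightFirst_neg (R j)).2,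
      or_congr Iff.rfl <| exists_congr fun i =>
        not_congr (leftFirst_neg_and_rightFirst_neg (L i)).1⟩

theorem leftFirst_neg (x : PGame) : LeftFirst (-x) ↔ RightFirst x :=
  (leftFirst_neg_and_rightFirst_neg x).1

theorem rightFirst_neg (x : PGame) : RightFirst (-x) ↔ LeftFirst x :=
  (leftFirst_neg_and_rightFirst_neg x).2

theorem misereOutcome_eq_N_iff {x : PGame} :
    misereOutcome x = Outcome.N ↔ LeftFirst x ∧ RightFirst x := by
  unfold misereOutcome
  split_ifs <;> simp_all [LeftFirst, RightFirst]

theorem misereOutcome_congr {x y : PGame} (hL : LeftFirst x ↔ LeftFirst y)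
    (hR : RightFirst x ↔ RightFirst y) : misereOutcome x = misereOutcome y := by
  unfold misereOutcome
  rw [show (wins x).1 = (wins y).1 from propext hL, show (wins x).2 = (wins y).2 from propext hR]

theorem misereOutcome_neg_eq_N_iff {x : PGame} :
    misereOutcome (-x) = Outcome.N ↔ misereOutcome x = Outcome.N := by
  rw [misereOutcome_eq_N_iff, misereOutcome_eq_N_iff, leftFirst_neg, rightFirst_neg, and_comm]

theorem dicot_iff {x : PGame} : Dicot x ↔ (IsEmpty x.LeftMoves ↔ IsEmpty x.RightMoves) ∧
    (∀ i, Dicot (x.moveLeft i)) ∧ ∀ j, Dicot (x.moveRight j) := by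
  cases x; rw [Dicot]; rfl

theorem Dicot.neg : ∀ {x : PGame}, Dicot x → Dicot (-x)
  | mk _ _ _ _, ⟨hE, hL, hR⟩ => ⟨hE.symm, fun j => (hR j).neg, fun i => (hL i).neg⟩

theorem wins_add_of_isEmpty {x : PGame} [hl : IsEmpty x.LeftMoves] [hr : IsEmpty x.RightMoves]
    (y : PGame) : (LeftFirst (y + x) ↔ LeftFirst y) ∧ (RightFirst (y + x) ↔ RightFirst y) := by
  induction y using wellFounded_subsequent.induction with
  | _ y ih =>
  have ihL i : RightFirst (y.moveLeft i + x) ↔ RightFirst (y.moveLeft i) :=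
    (ih _ (Subsequent.moveLeft i)).2
  have ihR j : LeftFirst (y.moveRight j + x) ↔ LeftFirst (y.moveRight j) :=
    (ih _ (Subsequent.moveRight j)).1
  rw [leftFirst_add_iff, rightFirst_add_iff, leftFirst_iff (x := y), rightFirst_iff (x := y)]
  simp only [ihL, ihR, IsEmpty.exists_iff, hl, hr, and_true, or_false]

theorem Follower.refl (G : PGame) : Follower G G :=
  Or.inl rfl

theorem Follower.trans {H K G : PGame} (hHK : Follower H K) (hKG : Follower K G) :
    Follower H G := by
  rcases hHK with rfl | hHK
  · exact hKG
  rcases hKG with rfl | hKG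
  · exact Or.inr hHK
  · exact Or.inr (hHK.trans hKG)

theorem follower_moveLeft (G : PGame) (i : G.LeftMoves) : Follower (G.moveLeft i) G :=
  Or.inr (Subsequent.moveLeft i)

theorem follower_moveRight (G : PGame) (j : G.RightMoves) : Follower (G.moveRight j) G :=
  Or.inr (Subsequent.moveRight j)

theorem Follower.neg {H G : PGame} : Follower H G → Follower (-H) (-G)
  | .inl h => .inl (congrArg _ h)
  | .inr h => .inr h.neg

def LeftRestorable (S : Set PGame) : Prop :=
  ∀ A ∈ S, LeftFirst A ∧ ∀ j, ∃ i, (A.moveRight j).moveLeft i ∈ S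

theorem LeftRestorable.wins_add {S : Set PGame} (hS : LeftRestorable S) {A : PGame} (hA : A ∈ S)
    {X : PGame} (hX : Dicot X) :
    (LeftFirst X → LeftFirst (A + X)) ∧ (¬ RightFirst X → ¬ RightFirst (A + X)) := by
  induction A using wellFounded_subsequent.induction generalizing X with
  | _ A ihA =>
  induction X using wellFounded_subsequent.induction with
  | _ X ihX =>
  obtain ⟨hAL, hAR⟩ := hS A hA
  obtain ⟨hXE, hXL, hXR⟩ := dicot_iff.mp hX
  constructor
  · rw [leftFirst_iff]
    rintro (hXl | ⟨i, hi⟩)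
    · have : IsEmpty X.RightMoves := hXE.mp hXl
      exact (wins_add_of_isEmpty A).1.mpr hAL
    · exact leftFirst_add_iff.mpr <| .inr <| .inr
        ⟨i, (ihX _ (Subsequent.moveLeft i) (hXL i)).2 hi⟩
  · intro hRX hRAX
    obtain ⟨hXr, hXRL⟩ : ¬ IsEmpty X.RightMoves ∧ ∀ j, LeftFirst (X.moveRight j) := by
      simpa [rightFirst_iff] using hRX
    rcases rightFirst_add_iff.mp hRAX with ⟨-, hXr'⟩ | ⟨j, hj⟩ | ⟨j, hj⟩
    · exact hXr hXr'
    · obtain ⟨i, hi⟩ := hAR j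
      refine hj (leftFirst_add_iff.mpr <| .inr <| .inl ⟨i, ?_⟩)
      exact (ihA _ ((Subsequent.moveLeft i).trans (Subsequent.moveRight j)) hi hX).2 hRX
    · exact hj ((ihX _ (Subsequent.moveRight j) (hXR j)).1 (hXRL j))

theorem LeftRestorable.misereOutcome_add {S : Set PGame} (hS : LeftRestorable S)
    (hneg : ∀ A ∈ S, -A ∈ S) {A : PGame} (hA : A ∈ S) {X : PGame} (hX : Dicot X) :
    misereOutcome (A + X) = misereOutcome X := by
  obtain ⟨hL, hR⟩ := hS.wins_add hA hX
  obtain ⟨hL', hR'⟩ := hS.wins_add (hneg A hA) hX.neg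
  simp only [← PGame.neg_add, leftFirst_neg, rightFirst_neg] at hL' hR'
  exact misereOutcome_congr ⟨not_imp_not.mp hR', hL⟩ ⟨not_imp_not.mp hR, hL'⟩

def ConjugateSumsN (G : PGame) : Prop :=
  ∀ H, Follower H G → misereOutcome (H + -H) = Outcome.N

theorem ConjugateSumsN.of_follower {G H : PGame} (hG : ConjugateSumsN G) (hHG : Follower H G) :
    ConjugateSumsN H :=
  fun K hKH => hG K (hKH.trans hHG)

theorem ConjugateSumsN.neg {G : PGame} (hG : ConjugateSumsN G) : ConjugateSumsN (-G) := by
  intro H hH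
  have hN := hG (-H) (by simpa using hH.neg)
  rw [← misereOutcome_neg_eq_N_iff] at hN
  simpa [PGame.neg_add] using hN

theorem leftRestorable_conjugateSums :
    LeftRestorable {A | ∃ G, ConjugateSumsN G ∧ G + -G = A} := by
  rintro _ ⟨G, hG, rfl⟩
  refine ⟨(misereOutcome_eq_N_iff.mp (hG G (Follower.refl G))).1, fun k => ?_⟩
  obtain ⟨k | k, rfl⟩ := toRightMovesAdd.surjective k
  · rw [add_moveRight_inl]
    refine ⟨toLeftMovesAdd (.inr (toLeftMovesNeg k)), G.moveRight k,
      hG.of_follower (follower_moveRight G k), ?_⟩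
    rw [add_moveLeft_inr, moveLeft_neg]
  · obtain ⟨i, rfl⟩ := toRightMovesNeg.surjective k
    rw [add_moveRight_inr, moveRight_neg]
    refine ⟨toLeftMovesAdd (.inl i), G.moveLeft i, hG.of_follower (follower_moveLeft G i), ?_⟩
    rw [add_moveLeft_inl]

end Misere

open Misere in
theorem invertibility_sufficient_dicot_general (G : PGame)
    (hf : ∀ H : PGame, Follower H G → misereOutcome (H + -H) = Outcome.N) :
    ∀ X : PGame, Dicot X → misereOutcome (G + -G + X) = misereOutcome X := by
  intro X hX
  refine leftRestorable_conjugateSums.misereOutcome_add ?_ ⟨G, hf, rfl⟩ hX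
  rintro _ ⟨H, hH, rfl⟩
  exact ⟨-H, hH.neg, (PGame.neg_add H (-H)).symm⟩

open Misere in
/-- McKay–Milley–Nowakowski: if `G` is dicot, `G + Ḡ` has misère outcome N,
and `H + H̄` has misère outcome N for every follower `H` of `G`, then `G + Ḡ ≡ 0` modulo
the universe of dicot games. -/
theorem invertibility_sufficient_dicot (G : PGame) (hG : Dicot G)
    (h : misereOutcome (G + -G) = Outcome.N)
    (hf : ∀ H : PGame, Follower H G → misereOutcome (H + -H) = Outcome.N) :
    ∀ X : PGame, Dicot X → misereOutcome (G + -G + X) = misereOutcome X :=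
  invertibility_sufficient_dicot_general G hf
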